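/- Let G be a 2-connected weighted graph, let x be a vertex of G, and suppose every vertex v ≠ x satisfies d^w(v) ≥ d for a real number d. Then G contains a path starting at x of weight at least d. (This follows from the Bondy–Fan theorem by taking y to be any neighbor of x.) -/

import Mathlib

/-!
Take a heaviest path `p` from `x` and, among those, a longest one; it ends at some `z ≠ x`
(as `x` has a neighbour) and all neighbours of `z` lie on `p`. For a neighbour `u` of `z`, let
`uu'` be the edge leaving `u` along `p`: the Pósa rotation replacing `uu'` by `uz` gives another
path from `x`, so `w(z,u) ≤ w(u,u')` by maximality. These edges `uu'` are distinct edges of `p`,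
whence `d ≤ d^w(z) ≤ w(p)`.
-/

open SimpleGraph

variable {V : Type*}

/-- A graph is 2-connected if it has at least 3 vertices and remains
connected after deleting any single vertex. -/
def SimpleGraph.TwoConnected (G : SimpleGraph V) : Prop :=
  3 ≤ Nat.card V ∧ ∀ v : V, (G.induce {u : V | u ≠ v}).Connected

/-- The weighted degree of a vertex: sum of the weights of incident edges. -/
noncomputable def SimpleGraph.wDeg (G : SimpleGraph V) (w : V → V → ℝ) (v : V) : ℝ :=
  ∑ᶠ u ∈ {u : V | G.Adj v u}, w v u

/-- The weight of a walk: the sum of the weights of its edges. -/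
def SimpleGraph.Walk.wWeight {G : SimpleGraph V} (w : V → V → ℝ) {u v : V}
    (p : G.Walk u v) : ℝ :=
  (p.darts.map fun d => w d.toProd.1 d.toProd.2).sum

namespace SimpleGraph

variable {G : SimpleGraph V} (w : V → V → ℝ)

namespace Walk

@[simp]
lemma wWeight_nil {u : V} : (nil : G.Walk u u).wWeight w = 0 := rfl

@[simp]
lemma wWeight_cons {u v z : V} (h : G.Adj u v) (p : G.Walk v z) :
    (cons h p).wWeight w = w u v + p.wWeight w := by
  simp [wWeight]

@[simp]
lemma wWeight_append {u v z : V} (p : G.Walk u v) (q : G.Walk v z) :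
    (p.append q).wWeight w = p.wWeight w + q.wWeight w := by
  simp [wWeight, darts_append]

@[simp]
lemma wWeight_concat {u v z : V} (p : G.Walk u v) (h : G.Adj v z) :
    (p.concat h).wWeight w = p.wWeight w + w v z := by
  simp [wWeight, darts_concat]

lemma wWeight_reverse (hsymm : ∀ u v, w u v = w v u) {u v : V} (p : G.Walk u v) :
    p.reverse.wWeight w = p.wWeight w := by
  induction p with
  | nil => rfl
  | cons h p ih => simp [reverse_cons, ih, hsymm, add_comm]

lemma IsTrail.wWeight_eq_sum_darts_toFinset [DecidableEq V] {u v : V} {p : G.Walk u v}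
    (hp : p.IsTrail) : p.wWeight w = ∑ d ∈ p.darts.toFinset, w d.fst d.snd :=
  (List.sum_toFinset _ hp.edges_nodup.of_map).symm

/-- Pósa rotation: closing the edge `zu` and deleting the edge `uu'` that leaves `u` along `p`
turns the path `p` into a path from `x` to `u'`. -/
lemma IsPath.exists_rotation (hsymm : ∀ u v, w u v = w v u) {x z u : V} {p : G.Walk x z}
    (hp : p.IsPath) (hzu : G.Adj z u) (hu : u ∈ p.support) :
    ∃ d ∈ p.darts, d.fst = u ∧ ∃ q : G.Walk x d.snd,
      q.IsPath ∧ q.wWeight w + w d.fst d.snd = p.wWeight w + w z u := by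
  classical
  obtain ⟨u', huu', r, hr⟩ := not_nil_iff.mp (not_nil_of_ne (p := p.dropUntil u hu) hzu.ne')
  set t := p.takeUntil u hu
  have hspec : p = t.append (cons huu' r) := by rw [← hr]; exact (take_spec p hu).symm
  refine ⟨⟨(u, u'), huu'⟩, by rw [hspec]; simp [darts_append], rfl,
    t.append (cons hzu.symm r.reverse), ?_, ?_⟩
  · have hnodup : (t.support ++ r.support).Nodup := by
      have := hp.support_nodup
      rw [hspec, support_append] at this
      simpa using this
    rw [isPath_def, support_append, support_cons, List.tail_cons, support_reverse]
    exact ((List.reverse_perm r.support).append_left t.support).nodup_iff.mpr hnodup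
  · rw [hspec]
    simp only [wWeight_append, wWeight_cons, wWeight_reverse w hsymm, hsymm u z]
    ring

variable {w}

lemma IsPath.exists_dart_ge_of_heaviest (hsymm : ∀ u v, w u v = w v u) {x z u : V}
    {p : G.Walk x z} (hp : p.IsPath)
    (hmax : ∀ (z' : V) (q : G.Walk x z'), q.IsPath → q.wWeight w ≤ p.wWeight w)
    (hzu : G.Adj z u) (hu : u ∈ p.support) :
    ∃ d ∈ p.darts, d.fst = u ∧ w z u ≤ w d.fst d.snd := by
  obtain ⟨d, hd, hdu, q, hq, hweight⟩ := hp.exists_rotation w hsymm hzu hu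
  exact ⟨d, hd, hdu, by linarith [hmax _ q hq]⟩

lemma IsPath.wDeg_le_wWeight_of_heaviest [Finite V] (hsymm : ∀ u v, w u v = w v u)
    (hnn : ∀ u v, 0 ≤ w u v) {x z : V} {p : G.Walk x z} (hp : p.IsPath)
    (hmax : ∀ (z' : V) (q : G.Walk x z'), q.IsPath → q.wWeight w ≤ p.wWeight w)
    (hnbr : ∀ u, G.Adj z u → u ∈ p.support) :
    G.wDeg w z ≤ p.wWeight w := by
  classical
  have := Fintype.ofFinite V
  set T := p.darts.toFinset
  have hfiber : ∀ u ∈ G.neighborFinset z, w z u ≤ ∑ d ∈ T with d.fst = u, w d.fst d.snd := by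
    intro u hu
    rw [mem_neighborFinset] at hu
    obtain ⟨d, hd, rfl, hle⟩ := hp.exists_dart_ge_of_heaviest hsymm hmax hu (hnbr _ hu)
    exact hle.trans (Finset.single_le_sum (f := fun d : G.Dart => w d.fst d.snd)
      (fun _ _ => hnn _ _) (Finset.mem_filter.mpr ⟨List.mem_toFinset.mpr hd, rfl⟩))
  calc G.wDeg w z = ∑ u ∈ G.neighborFinset z, w z u := by
        rw [wDeg, ← finsum_mem_coe_finset, coe_neighborFinset]; rfl
    _ ≤ ∑ u ∈ G.neighborFinset z, ∑ d ∈ T with d.fst = u, w d.fst d.snd :=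
        Finset.sum_le_sum hfiber
    _ ≤ ∑ d ∈ T, w d.fst d.snd :=
        Finset.sum_fiberwise_le_sum_of_sum_fiber_nonneg fun _ _ =>
          Finset.sum_nonneg fun _ _ => hnn _ _
    _ = p.wWeight w := (hp.isTrail.wWeight_eq_sum_darts_toFinset w).symm

end Walk

/-- Among the heaviest paths from `x` take a longest one: since weights are nonnegative,
it cannot be extended at its end. -/
lemma exists_heaviest_path_from [Finite V] {w : V → V → ℝ} (hnn : ∀ u v, 0 ≤ w u v) (x : V) :
    ∃ (z : V) (p : G.Walk x z), p.IsPath ∧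
      (∀ (z' : V) (q : G.Walk x z'), q.IsPath → q.wWeight w ≤ p.wWeight w) ∧
      ∀ u, G.Adj z u → u ∈ p.support := by
  classical
  have := Fintype.ofFinite V
  obtain ⟨⟨z, p, hp⟩, -, hmax⟩ :=
    Finset.exists_max_image (Finset.univ : Finset (Σ z, G.Path x z))
      (fun q => toLex ((q.2 : G.Walk x q.1).wWeight w, (q.2 : G.Walk x q.1).length))
      ⟨⟨x, Path.nil⟩, Finset.mem_univ _⟩
  have hlex : ∀ (z' : V) (q : G.Walk x z'), q.IsPath →
      toLex (q.wWeight w, q.length) ≤ toLex (p.wWeight w, p.length) :=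
    fun z' q hq => hmax ⟨z', q, hq⟩ (Finset.mem_univ _)
  refine ⟨z, p, hp, fun z' q hq => Prod.Lex.monotone_fst _ _ (hlex z' q hq), ?_⟩
  intro u hzu
  by_contra hu
  have h := hlex u _ (hp.concat hu hzu)
  rw [Prod.Lex.le_iff, Walk.wWeight_concat, Walk.length_concat] at h
  rcases h with h | ⟨-, h⟩
  · linarith [hnn z u, show p.wWeight w + w z u < p.wWeight w from h]
  · exact Nat.not_succ_le_self _ h

lemma TwoConnected.finite (h : G.TwoConnected) : Finite V :=
  Nat.finite_of_card_ne_zero (by linarith [h.1])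

lemma TwoConnected.exists_adj (h : G.TwoConnected) (x : V) : ∃ y, G.Adj x y := by
  classical
  have := h.finite
  have := Fintype.ofFinite V
  have hcard : 3 ≤ Fintype.card V := Nat.card_eq_fintype_card (α := V) ▸ h.1
  have : Nontrivial V := Fintype.one_lt_card_iff_nontrivial.mp (by omega)
  obtain ⟨v, hv⟩ := exists_ne x
  have : Nontrivial {u : V | u ≠ v} :=
    Fintype.one_lt_card_iff_nontrivial.mp (by rw [Set.card_ne_eq]; omega)
  obtain ⟨y, hy⟩ := (h.2 v).preconnected.exists_adj_of_nontrivial ⟨x, hv.symm⟩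
  exact ⟨y, hy⟩

end SimpleGraph

theorem stmt14_general (G : SimpleGraph V) (w : V → V → ℝ)
    (hsymm : ∀ u v, w u v = w v u) (hnn : ∀ u v, 0 ≤ w u v)
    (h2 : G.TwoConnected) (x : V) (d : ℝ)
    (hd : ∀ v : V, v ≠ x → d ≤ G.wDeg w v) :
    ∃ (z : V) (p : G.Walk x z), p.IsPath ∧ d ≤ p.wWeight w := by
  have := h2.finite
  obtain ⟨z, p, hp, hmax, hnbr⟩ := G.exists_heaviest_path_from hnn x
  have hzx : z ≠ x := by
    rintro rfl
    obtain ⟨y, hxy⟩ := h2.exists_adj z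
    have hnil : p = Walk.nil := by simpa using congrArg Subtype.val (Path.loop_eq ⟨p, hp⟩)
    subst hnil
    simpa [hxy.ne'] using hnbr y hxy
  exact ⟨z, p, hp, (hd z hzx).trans (hp.wDeg_le_wWeight_of_heaviest hsymm hnn hmax hnbr)⟩

theorem stmt14 [Fintype V] (G : SimpleGraph V) (w : V → V → ℝ)
    (hsymm : ∀ u v, w u v = w v u) (hnn : ∀ u v, 0 ≤ w u v)
    (h2 : G.TwoConnected) (x : V) (d : ℝ)
    (hd : ∀ v : V, v ≠ x → d ≤ G.wDeg w v) :
    ∃ (z : V) (p : G.Walk x z), p.IsPath ∧ d ≤ p.wWeight w :=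
  stmt14_general G w hsymm hnn h2 x d hd
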